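/- arXiv:1305.4027 — 2 statements merged into one kernel-verified Lean document; each statement's English description precedes it below -/
import Mathlib

section
/- For the 1-random coordinate descent method with uniform selection applied to a smooth function f (h = 0) whose block gradients are Lipschitz with constants L_i, the expected gradient norms satisfy min_{0 ≤ l ≤ k} E[(‖∇f(x^l)‖*_L)²] ≤ 2N (f(x⁰) − f*) / (k + 1), where ‖y‖*_L = (Σ_i L_i^{-1} ‖y_i‖²)^{1/2} and f* = inf f. -/
/-! Each block step `x ↦ x - L_i⁻¹ U_i ∇_i f(x)` decreases `f` by at least
`‖∇_i f(x)‖² / (2 L_i)` (the descent lemma along the block), so averaging over the uniform index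
gives `E f(x^{l+1}) ≤ E f(x^l) - E[(‖∇f(x^l)‖*_L)²] / (2N)`. Summing telescopes to
`∑_{l ≤ k} E[(‖∇f(x^l)‖*_L)²] ≤ 2N (f(x⁰) - f*)`, and the minimum is at most the mean.
Expectations are uniform averages `𝔼` over index words `Fin l → Fin N`. -/

open scoped BigOperators RealInnerProductSpace
open Finset Filter

noncomputable section

/-- The ambient space `ℝ^n` with the Euclidean norm. -/
abbrev En (n : ℕ) := EuclideanSpace ℝ (Fin n)

/-- Projection onto block `i` of the block decomposition of `ℝ^n` given by the
block-index map `blk : Fin n → Fin N`; it realizes `U_i U_iᵀ y`. -/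
def blockProj {n N : ℕ} (blk : Fin n → Fin N) (i : Fin N) (y : En n) : En n :=
  WithLp.toLp 2 (fun j => if blk j = i then y j else 0)

/-- The squared block norm `‖x‖_L² = ∑ i, L i ‖x_i‖²`. -/
def blockNormSq {n N : ℕ} (blk : Fin n → Fin N) (L : Fin N → ℝ) (x : En n) : ℝ :=
  ∑ i, L i * ‖blockProj blk i x‖ ^ 2

theorem le_add_deriv_add_of_deriv_sub_le {φ φ' : ℝ → ℝ} {c : ℝ}
    (hφ : ∀ t, HasDerivAt φ (φ' t) t) (h : ∀ t ∈ Set.Ico (0 : ℝ) 1, φ' t - φ' 0 ≤ c * t) :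
    φ 1 ≤ φ 0 + φ' 0 + c / 2 := by
  have hB : ∀ t, HasDerivAt (fun t => φ 0 + t * φ' 0 + c / 2 * t ^ 2) (φ' 0 + c * t) t := by
    intro t
    have hlin : HasDerivAt (fun t => t * φ' 0) (φ' 0) t := by
      simpa using (hasDerivAt_id t).mul_const (φ' 0)
    have hquad : HasDerivAt (fun t => c / 2 * t ^ 2) (c * t) t :=
      ((hasDerivAt_pow 2 t).const_mul (c / 2)).congr_deriv (by norm_num; ring)
    exact (hlin.const_add _).add hquad
  have hbound := image_le_of_deriv_right_le_deriv_boundary (a := 0) (b := 1)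
    (fun t _ => (hφ t).continuousAt.continuousWithinAt) (fun t _ => (hφ t).hasDerivWithinAt)
    (by simp) (fun t _ => (hB t).continuousAt.continuousWithinAt)
    (fun t _ => (hB t).hasDerivWithinAt) (fun t ht => by linarith [h t ht])
    (Set.right_mem_Icc.2 zero_le_one)
  simpa using hbound

theorem le_add_inner_add_of_inner_gradient_sub_le {E : Type*} [NormedAddCommGroup E]
    [InnerProductSpace ℝ E] [CompleteSpace E] {f : E → ℝ} {g : E → E}
    (hg : ∀ x, HasGradientAt f (g x) x) {x s : E} {c : ℝ}
    (h : ∀ t ∈ Set.Ico (0 : ℝ) 1, ⟪g (x + t • s) - g x, s⟫ ≤ c * t) :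
    f (x + s) ≤ f x + ⟪g x, s⟫ + c / 2 := by
  have hφ : ∀ t : ℝ, HasDerivAt (fun t => f (x + t • s)) ⟪g (x + t • s), s⟫ t := by
    intro t
    have hline : HasDerivAt (fun t : ℝ => x + t • s) s t := by
      simpa using ((hasDerivAt_id t).smul_const s).const_add x
    simpa only [InnerProductSpace.toDual_apply_apply, Function.comp_def] using
      (hg (x + t • s)).hasFDerivAt.comp_hasDerivAt t hline
  simpa using le_add_deriv_add_of_deriv_sub_le hφ fun t ht => by
    simpa [inner_sub_left] using h t ht

theorem expect_fin_succ_fun {α M : Type*} [Fintype α] [AddCommMonoid M] [Module ℚ≥0 M] (l : ℕ)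
    (φ : (Fin (l + 1) → α) → M) :
    𝔼 w, φ w = 𝔼 w : Fin l → α, 𝔼 a, φ (Fin.snoc w a) := by
  rw [← Fintype.expect_equiv (Fin.snocEquiv fun _ => α) (fun p => φ (Fin.snoc p.2 p.1)) φ
    (fun _ => rfl), ← Finset.univ_product_univ, Finset.expect_product' univ univ
    (fun a w => φ (Fin.snoc w a)), Finset.expect_comm]

@[simp]
theorem blockProj_apply {n N : ℕ} (blk : Fin n → Fin N) (i : Fin N) (y : En n) (j : Fin n) :
    blockProj blk i y j = if blk j = i then y j else 0 :=
  rfl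

theorem inner_blockProj_left_of_support {n N : ℕ} {blk : Fin n → Fin N} {i : Fin N} {s : En n}
    (hs : ∀ j, blk j ≠ i → s j = 0) (y : En n) :
    ⟪blockProj blk i y, s⟫ = ⟪y, s⟫ := by
  simp only [PiLp.inner_apply, RCLike.inner_apply, conj_trivial, blockProj_apply]
  refine Finset.sum_congr rfl fun j _ => ?_
  by_cases h : blk j = i <;> simp [h, hs j]

theorem inner_blockProj_right_self {n N : ℕ} (blk : Fin n → Fin N) (i : Fin N) (y : En n) :
    ⟪y, blockProj blk i y⟫ = ‖blockProj blk i y‖ ^ 2 := by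
  rw [← inner_blockProj_left_of_support (blk := blk) (i := i) (fun j hj => by simp [hj]),
    real_inner_self_eq_norm_sq]

theorem descent_blockGradientStep {n N : ℕ} {blk : Fin n → Fin N} {f : En n → ℝ}
    {g : En n → En n} (hg : ∀ x, HasGradientAt f (g x) x) {i : Fin N} {ℓ : ℝ} (hℓ : 0 < ℓ)
    (hlip : ∀ x s : En n, (∀ j, blk j ≠ i → s j = 0) →
      ‖blockProj blk i (g (x + s)) - blockProj blk i (g x)‖ ≤ ℓ * ‖s‖)
    (x : En n) :
    f (x - ℓ⁻¹ • blockProj blk i (g x)) ≤ f x - (2 * ℓ)⁻¹ * ‖blockProj blk i (g x)‖ ^ 2 := by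
  set p := blockProj blk i (g x)
  set s : En n := -(ℓ⁻¹ • p) with hs
  have hsupp : ∀ j, blk j ≠ i → s j = 0 := fun j hj => by simp [s, p, hj]
  have hgrowth : ∀ t ∈ Set.Ico (0 : ℝ) 1, ⟪g (x + t • s) - g x, s⟫ ≤ ℓ * ‖s‖ ^ 2 * t := by
    intro t ht
    calc ⟪g (x + t • s) - g x, s⟫
        = ⟪blockProj blk i (g (x + t • s)) - blockProj blk i (g x), s⟫ := by
          rw [inner_sub_left, inner_sub_left, inner_blockProj_left_of_support hsupp,
            inner_blockProj_left_of_support hsupp]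
      _ ≤ ‖blockProj blk i (g (x + t • s)) - blockProj blk i (g x)‖ * ‖s‖ :=
          real_inner_le_norm _ _
      _ ≤ ℓ * ‖t • s‖ * ‖s‖ := by gcongr; exact hlip x (t • s) fun j hj => by simp [hsupp j hj]
      _ = ℓ * ‖s‖ ^ 2 * t := by
          rw [norm_smul, Real.norm_eq_abs, abs_of_nonneg ht.1]; ring
  have hinner : ⟪g x, s⟫ = -(ℓ⁻¹ * ‖p‖ ^ 2) := by
    rw [hs, inner_neg_right, real_inner_smul_right, inner_blockProj_right_self]
  have hnorm : ‖s‖ ^ 2 = ℓ⁻¹ ^ 2 * ‖p‖ ^ 2 := by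
    rw [hs, norm_neg, norm_smul, Real.norm_eq_abs, abs_of_pos (inv_pos.2 hℓ)]; ring
  calc f (x - ℓ⁻¹ • p) = f (x + s) := by rw [hs, sub_eq_add_neg]
    _ ≤ f x + ⟪g x, s⟫ + ℓ * ‖s‖ ^ 2 / 2 := le_add_inner_add_of_inner_gradient_sub_le hg hgrowth
    _ = f x - (2 * ℓ)⁻¹ * ‖p‖ ^ 2 := by
        rw [hinner, hnorm]; field_simp; ring

theorem expect_descent_blockGradientStep {n N : ℕ} [NeZero N] {blk : Fin n → Fin N}
    {L : Fin N → ℝ} (hL : ∀ i, 0 < L i) {f : En n → ℝ} {g : En n → En n}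
    (hg : ∀ x, HasGradientAt f (g x) x)
    (hlip : ∀ (i : Fin N) (x s : En n), (∀ j, blk j ≠ i → s j = 0) →
      ‖blockProj blk i (g (x + s)) - blockProj blk i (g x)‖ ≤ L i * ‖s‖)
    (x : En n) :
    𝔼 i, f (x - (L i)⁻¹ • blockProj blk i (g x)) ≤
      f x - (2 * (N : ℝ))⁻¹ * blockNormSq blk L⁻¹ (g x) := by
  calc 𝔼 i, f (x - (L i)⁻¹ • blockProj blk i (g x))
      ≤ 𝔼 i, (f x - (2 * L i)⁻¹ * ‖blockProj blk i (g x)‖ ^ 2) :=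
        expect_le_expect fun i _ => descent_blockGradientStep hg (hL i) (hlip i) x
    _ = f x - (2 * (N : ℝ))⁻¹ * blockNormSq blk L⁻¹ (g x) := by
        rw [expect_sub_distrib, Fintype.expect_const, Fintype.expect_eq_sum_div_card,
          blockNormSq, Fintype.card_fin, mul_sum, sum_div]
        congr 1
        refine sum_congr rfl fun i _ => ?_
        simp only [Pi.inv_apply]
        field_simp

theorem sum_range_le_sub_of_le_sub {α : Type*} [AddCommGroup α] [PartialOrder α]
    [IsOrderedAddMonoid α] {F G : ℕ → α} {m : α} (hstep : ∀ l, G l ≤ F l - F (l + 1))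
    (hm : ∀ l, m ≤ F l) (k : ℕ) :
    ∑ l ∈ range k, G l ≤ F 0 - m :=
  calc ∑ l ∈ range k, G l ≤ ∑ l ∈ range k, (F l - F (l + 1)) := sum_le_sum fun l _ => hstep l
    _ = F 0 - F k := sum_range_sub' F k
    _ ≤ F 0 - m := sub_le_sub_left (hm k) _

theorem exists_le_div_of_sum_range_le {α : Type*} [Field α] [LinearOrder α] [IsStrictOrderedRing α]
    {G : ℕ → α} {C : α} (k : ℕ) (h : ∑ l ∈ range (k + 1), G l ≤ C) :
    ∃ l ≤ k, G l ≤ C / (k + 1) := by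
  have hmean : 𝔼 l ∈ range (k + 1), G l ≤ C / (k + 1) := by
    rw [expect_eq_sum_div_card, card_range]; push_cast; gcongr
  obtain ⟨l, hl, hle⟩ := exists_le_of_expect_le nonempty_range_add_one hmean
  exact ⟨l, Nat.lt_succ_iff.mp (mem_range.mp hl), hle⟩

/-- For the 1-random coordinate descent method with uniform block
selection applied to a smooth `f` (`h = 0`) with block-Lipschitz gradients
(iteration `x^{k+1} = x^k − (1/L_{i_k}) U_{i_k} ∇_{i_k} f(x^k)`, iterates encoded along
every realization `w` of the i.i.d. uniform indices), the expected squared dual gradient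
norms `(‖∇f(x^l)‖*_L)² = ∑ i L_i⁻¹ ‖∇_i f(x^l)‖²` satisfy
`min_{0 ≤ l ≤ k} E[(‖∇f(x^l)‖*_L)²] ≤ 2N (f(x⁰) − f*)/(k+1)` with `f* = inf f`. -/
theorem stmt7 {n N : ℕ} (hN : 0 < N) (blk : Fin n → Fin N)
    (L : Fin N → ℝ) (hL : ∀ i, 0 < L i)
    (f : En n → ℝ) (g : En n → En n) (hg : ∀ x, HasGradientAt f (g x) x)
    (hlip : ∀ (i : Fin N) (x s : En n), (∀ j, blk j ≠ i → s j = 0) →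
      ‖blockProj blk i (g (x + s)) - blockProj blk i (g x)‖ ≤ L i * ‖s‖)
    (fstar : ℝ) (hfstar : IsGLB (Set.range f) fstar)
    (x0 : En n) (X : (k : ℕ) → (Fin k → Fin N) → En n)
    (hX0 : ∀ w, X 0 w = x0)
    (hXs : ∀ k (w : Fin (k + 1) → Fin N),
      X (k + 1) w = X k (fun t => w t.castSucc) -
        (L (w (Fin.last k)))⁻¹ •
          blockProj blk (w (Fin.last k)) (g (X k (fun t => w t.castSucc))))
    (k : ℕ) :
    ∃ l ≤ k, ((N : ℝ) ^ l)⁻¹ *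
        (∑ w : Fin l → Fin N, ∑ i, (L i)⁻¹ * ‖blockProj blk i (g (X l w))‖ ^ 2) ≤
      2 * N * (f x0 - fstar) / (k + 1) := by
  have : NeZero N := ⟨hN.ne'⟩
  set Φ : ℕ → ℝ := fun l => 𝔼 w, f (X l w)
  set Γ : ℕ → ℝ := fun l => 𝔼 w, blockNormSq blk L⁻¹ (g (X l w))
  have hstep : ∀ l, (2 * (N : ℝ))⁻¹ * Γ l ≤ Φ l - Φ (l + 1) := by
    intro l
    have hΦ : Φ (l + 1) = 𝔼 w, 𝔼 i, f (X l w - (L i)⁻¹ • blockProj blk i (g (X l w))) := by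
      simp only [Φ, expect_fin_succ_fun, hXs, Fin.snoc_castSucc, Fin.snoc_last]
    have hdesc := expect_le_expect fun w (_ : w ∈ univ) =>
      expect_descent_blockGradientStep hL hg hlip (X l w)
    rw [expect_sub_distrib, ← mul_expect] at hdesc
    linarith
  have hlow : ∀ l, fstar ≤ Φ l := fun l =>
    le_expect univ_nonempty fun w _ => hfstar.1 (Set.mem_range_self _)
  obtain ⟨l, hl, hΓ⟩ := exists_le_div_of_sum_range_le k (sum_range_le_sub_of_le_sub hstep hlow _)
  have hΓl : ((N : ℝ) ^ l)⁻¹ *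
      (∑ w : Fin l → Fin N, ∑ i, (L i)⁻¹ * ‖blockProj blk i (g (X l w))‖ ^ 2) = Γ l := by
    simp [Γ, Fintype.expect_eq_sum_div_card, blockNormSq, div_eq_inv_mul]
  have hΦ0 : Φ 0 = f x0 := by simp [Φ, hX0]
  refine ⟨l, hl, ?_⟩
  rw [hΓl, mul_div_assoc, ← hΦ0]
  exact (inv_mul_le_iff₀ (by positivity)).1 hΓ
end
end

section
/- For the 2-random coordinate descent method on the linearly constrained problem min{F(x) = f(x) + h(x) : aᵀx = b}, the descent inequality F(x^{k+1}) ≤ F(x^k) − (L_{i_k j_k}/2)‖d_{i_k j_k}‖² holds for all k ≥ 0, where d_{i_k j_k} minimizes the 2-block quadratic model f(x^k) + ⟨∇_{i_k j_k} f(x^k), s⟩ + (L_{i_k j_k}/2)‖s‖² + h(x^k + s) subject to a_{i_k}ᵀ s_{i_k} + a_{j_k}ᵀ s_{j_k} = 0. -/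
/-!
Along directions supported on the blocks `i, j`, the block Lipschitz bound on the gradient gives
the descent lemma `f (x + d) ≤ f x + ⟪∇f x, d⟫ + L/2 ‖d‖²`. The model
`s ↦ ⟪∇f x, s⟫ + L/2 ‖s‖² + h (x + s)` is `L`-strongly convex because `h` is convex, so its
minimizer `d` over the feasible directions lies at least `L/2 ‖d‖²` below its value `h x` at the
feasible direction `0`. Adding the two inequalities gives the claim.
-/

open scoped BigOperators RealInnerProductSpace
open Finset Filter

noncomputable section

open Set
open scoped Topology

section Convex

variable {E : Type*} [NormedAddCommGroup E]

theorem StrongConvexOn.add_sq_norm_sub_le_of_isMinOn [NormedSpace ℝ E] {s : Set E} {m : ℝ}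
    {φ : E → ℝ} {x y : E} (hφ : StrongConvexOn s m φ) (hmin : IsMinOn φ s x) (hx : x ∈ s)
    (hy : y ∈ s) : φ x + m / 2 * ‖y - x‖ ^ 2 ≤ φ y := by
  have hsegment : ∀ t ∈ Ioo (0 : ℝ) 1, φ x + (1 - t) * (m / 2 * ‖y - x‖ ^ 2) ≤ φ y := by
    rintro t ⟨ht0, ht1⟩
    have hcomb := hφ.2 hy hx ht0.le (sub_nonneg.2 ht1.le) (add_sub_cancel t 1)
    have hle := hmin (hφ.1 hy hx ht0.le (sub_nonneg.2 ht1.le) (add_sub_cancel t 1))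
    simp only [smul_eq_mul, mem_ofPred_eq] at hcomb hle
    refine le_of_mul_le_mul_left ?_ ht0
    nlinarith
  have hlim : Tendsto (fun t : ℝ => φ x + (1 - t) * (m / 2 * ‖y - x‖ ^ 2)) (𝓝[>] 0)
      (𝓝 (φ x + m / 2 * ‖y - x‖ ^ 2)) :=
    ((by fun_prop : Continuous fun t : ℝ => φ x + (1 - t) * (m / 2 * ‖y - x‖ ^ 2)).tendsto' 0 _
      (by simp)).mono_left nhdsWithin_le_nhds
  exact le_of_tendsto hlim (eventually_of_mem (Ioo_mem_nhdsGT one_pos) hsegment)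

theorem ConvexOn.strongConvexOn_inner_add_sq_norm_add [InnerProductSpace ℝ E] {h : E → ℝ}
    (hh : ConvexOn ℝ univ h) (v x : E) (m : ℝ) {s : Set E} (hs : Convex ℝ s) :
    StrongConvexOn s m fun y => ⟪v, y⟫ + m / 2 * ‖y‖ ^ 2 + h (x + y) := by
  refine strongConvexOn_iff_convex.2 ?_
  refine (((innerₛₗ ℝ v).convexOn hs).add ((hh.translate_right x).subset (subset_univ s) hs)).congr
    fun y _ => ?_
  simp only [Pi.add_apply, innerₛₗ_apply_apply, Function.comp_apply]
  ring

theorem le_add_inner_add_sq_of_inner_gradient_sub_le [InnerProductSpace ℝ E] [CompleteSpace E]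
    {f : E → ℝ} {g : E → E} (hg : ∀ y, HasGradientAt f (g y) y) {x d : E} {L : ℝ}
    (hL : ∀ t ∈ Ico (0 : ℝ) 1, ⟪g (x + t • d) - g x, d⟫ ≤ L * t * ‖d‖ ^ 2) :
    f (x + d) ≤ f x + ⟪g x, d⟫ + L / 2 * ‖d‖ ^ 2 := by
  have hf : ∀ t : ℝ, HasDerivAt (fun t : ℝ => f (x + t • d)) ⟪g (x + t • d), d⟫ t := fun t => by
    have hline : HasDerivAt (fun t : ℝ => x + t • d) d t := by
      simpa using ((hasDerivAt_id t).smul_const d).const_add x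
    exact (hasGradientAt_iff_hasFDerivAt.mp (hg _)).comp_hasDerivAt t hline
  have hB : ∀ t : ℝ, HasDerivAt (fun t : ℝ => f x + t * ⟪g x, d⟫ + L / 2 * t ^ 2 * ‖d‖ ^ 2)
      (⟪g x, d⟫ + L * t * ‖d‖ ^ 2) t := fun t => by
    refine ((((hasDerivAt_id' t).mul_const ⟪g x, d⟫).const_add (f x)).add
      (((hasDerivAt_pow 2 t).const_mul (L / 2)).mul_const (‖d‖ ^ 2))).congr_deriv ?_
    push_cast
    ring
  have := image_le_of_deriv_right_le_deriv_boundary (a := 0) (b := 1)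
    (fun t _ => (hf t).continuousAt.continuousWithinAt) (fun t _ => (hf t).hasDerivWithinAt)
    (by simp) (fun t _ => (hB t).continuousAt.continuousWithinAt)
    (fun t _ => (hB t).hasDerivWithinAt)
    (fun t ht => by have := hL t ht; rw [inner_sub_left] at this; linarith)
    (right_mem_Icc.2 zero_le_one)
  simpa using this

end Convex

theorem convexOn_univ_of_eq_sum_apply {ι : Type*} [Fintype ι] {h : EuclideanSpace ℝ ι → ℝ}
    {H : ι → ℝ → ℝ} (hH : ∀ l, ConvexOn ℝ univ (H l)) (hsep : ∀ x, h x = ∑ l, H l (x l)) :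
    ConvexOn ℝ univ h := by
  refine ⟨convex_univ, fun x _ y _ a b ha hb hab => ?_⟩
  simp only [hsep, smul_eq_mul, mul_sum, ← sum_add_distrib, PiLp.add_apply, PiLp.smul_apply]
  exact sum_le_sum fun l _ => (hH l).2 trivial trivial ha hb hab

section Blocks

variable {n N : ℕ} (blk : Fin n → Fin N) (i j : Fin N)

def pairSubspace : Submodule ℝ (En n) where
  carrier := {s | ∀ l, blk l ≠ i → blk l ≠ j → s l = 0}
  add_mem' {s t} hs ht l hi hj := by simp [hs l hi hj, ht l hi hj]
  zero_mem' _ _ _ := rfl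
  smul_mem' c s hs l hi hj := by simp [hs l hi hj]

variable {blk i j}

theorem inner_blockProj_add_blockProj (hij : i ≠ j) (u : En n) {d : En n}
    (hd : d ∈ pairSubspace blk i j) :
    ⟪blockProj blk i u + blockProj blk j u, d⟫ = ⟪u, d⟫ := by
  simp only [PiLp.inner_apply, RCLike.inner_apply, conj_trivial]
  refine sum_congr rfl fun l _ => ?_
  by_cases hi : blk l = i
  · simp [blockProj, hi, hij]
  by_cases hj : blk l = j
  · simp [blockProj, hj, hij.symm]
  · simp [hd l hi hj]

theorem inner_gradient_sub_le_of_pairLipschitz (hij : i ≠ j) {g : En n → En n} {L : ℝ}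
    (hlip : ∀ x s, s ∈ pairSubspace blk i j →
      ‖(blockProj blk i (g (x + s)) + blockProj blk j (g (x + s))) -
        (blockProj blk i (g x) + blockProj blk j (g x))‖ ≤ L * ‖s‖)
    (x : En n) {d : En n} (hd : d ∈ pairSubspace blk i j) {t : ℝ} (ht : 0 ≤ t) :
    ⟪g (x + t • d) - g x, d⟫ ≤ L * t * ‖d‖ ^ 2 :=
  calc ⟪g (x + t • d) - g x, d⟫
      = ⟪(blockProj blk i (g (x + t • d)) + blockProj blk j (g (x + t • d))) -
          (blockProj blk i (g x) + blockProj blk j (g x)), d⟫ := by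
        rw [inner_sub_left, inner_sub_left, inner_blockProj_add_blockProj hij _ hd,
          inner_blockProj_add_blockProj hij _ hd]
    _ ≤ L * ‖t • d‖ * ‖d‖ :=
        (real_inner_le_norm _ _).trans
          (mul_le_mul_of_nonneg_right (hlip x _ (Submodule.smul_mem _ t hd)) (norm_nonneg d))
    _ = L * t * ‖d‖ ^ 2 := by rw [norm_smul, Real.norm_of_nonneg ht]; ring

end Blocks

theorem stmt12_general {n N : ℕ} (blk : Fin n → Fin N) (i j : Fin N) (hij : i ≠ j)
    (f h : En n → ℝ) (g : En n → En n) (hg : ∀ x, HasGradientAt f (g x) x)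
    (Lij : ℝ)
    (hlip : ∀ (x s : En n), (∀ l, blk l ≠ i → blk l ≠ j → s l = 0) →
      ‖(blockProj blk i (g (x + s)) + blockProj blk j (g (x + s))) -
        (blockProj blk i (g x) + blockProj blk j (g x))‖ ≤ Lij * ‖s‖)
    (Hc : Fin n → ℝ → ℝ) (hHconv : ∀ l, ConvexOn ℝ Set.univ (Hc l))
    (hsep : ∀ x : En n, h x = ∑ l, Hc l (x l))
    (a : En n)
    (x : En n)
    (d : En n) (hdsupp : ∀ l, blk l ≠ i → blk l ≠ j → d l = 0) (hdfeas : ⟪a, d⟫ = 0)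
    (hdmin : ∀ s : En n, (∀ l, blk l ≠ i → blk l ≠ j → s l = 0) → ⟪a, s⟫ = 0 →
      f x + ⟪g x, d⟫ + Lij / 2 * ‖d‖ ^ 2 + h (x + d) ≤
      f x + ⟪g x, s⟫ + Lij / 2 * ‖s‖ ^ 2 + h (x + s)) :
    f (x + d) + h (x + d) ≤ (f x + h x) - Lij / 2 * ‖d‖ ^ 2 := by
  have hdescent : f (x + d) ≤ f x + ⟪g x, d⟫ + Lij / 2 * ‖d‖ ^ 2 :=
    le_add_inner_add_sq_of_inner_gradient_sub_le hg fun t ht =>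
      inner_gradient_sub_le_of_pairLipschitz hij hlip x hdsupp ht.1
  let S := pairSubspace blk i j ⊓ LinearMap.ker (innerₛₗ ℝ a)
  have hmodel := (convexOn_univ_of_eq_sum_apply hHconv hsep).strongConvexOn_inner_add_sq_norm_add
    (g x) x Lij S.convex
  have hmin : IsMinOn (fun s => ⟪g x, s⟫ + Lij / 2 * ‖s‖ ^ 2 + h (x + s)) S d :=
    isMinOn_iff.2 fun s hs => by linarith [hdmin s hs.1 hs.2]
  have hoptimal := hmodel.add_sq_norm_sub_le_of_isMinOn hmin ⟨hdsupp, hdfeas⟩ S.zero_mem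
  simp only [inner_zero_right, norm_zero, add_zero, zero_sub, norm_neg] at hoptimal
  linarith

/-- Descent inequality for one step of the 2-random coordinate descent
method on `min {F(x) = f(x) + h(x) : aᵀx = b}`.  If `d` is supported on the pair of
blocks `(i, j)`, satisfies the constraint `a_iᵀ d_i + a_jᵀ d_j = 0` (i.e. `⟨a, d⟩ = 0`)
and minimizes the 2-block quadratic model
`s ↦ f(x) + ⟨∇_{ij} f(x), s⟩ + (L_{ij}/2)‖s‖² + h(x + s)` over such `s`, then
`F(x + d) ≤ F(x) − (L_{ij}/2)‖d‖²`. -/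
theorem stmt12 {n N : ℕ} (blk : Fin n → Fin N) (i j : Fin N) (hij : i ≠ j)
    (f h : En n → ℝ) (g : En n → En n) (hg : ∀ x, HasGradientAt f (g x) x)
    (Lij : ℝ) (hLij : 0 < Lij)
    (hlip : ∀ (x s : En n), (∀ l, blk l ≠ i → blk l ≠ j → s l = 0) →
      ‖(blockProj blk i (g (x + s)) + blockProj blk j (g (x + s))) -
        (blockProj blk i (g x) + blockProj blk j (g x))‖ ≤ Lij * ‖s‖)
    (Hc : Fin n → ℝ → ℝ) (hHconv : ∀ l, ConvexOn ℝ Set.univ (Hc l))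
    (hsep : ∀ x : En n, h x = ∑ l, Hc l (x l)) (hcont : Continuous h)
    (a : En n) (ha : a ≠ 0) (b : ℝ)
    (x : En n) (hx : ⟪a, x⟫ = b)
    (d : En n) (hdsupp : ∀ l, blk l ≠ i → blk l ≠ j → d l = 0) (hdfeas : ⟪a, d⟫ = 0)
    (hdmin : ∀ s : En n, (∀ l, blk l ≠ i → blk l ≠ j → s l = 0) → ⟪a, s⟫ = 0 →
      f x + ⟪g x, d⟫ + Lij / 2 * ‖d‖ ^ 2 + h (x + d) ≤
      f x + ⟪g x, s⟫ + Lij / 2 * ‖s‖ ^ 2 + h (x + s)) :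
    f (x + d) + h (x + d) ≤ (f x + h x) - Lij / 2 * ‖d‖ ^ 2 :=
  stmt12_general blk i j hij f h g hg Lij hlip Hc hHconv hsep a x d hdsupp hdfeas hdmin
end
end
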